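/- In a simplex-wise standard graph filtration, the number of trees in the merge forest restricted to nodes of level less than i equals the number of connected components of G_i; moreover this correspondence sends each tree to the component containing the vertices at its leaves. -/
import Mathlib


open SimpleGraph Finset

structure FGraph (V : Type) where
  verts : Finset V
  edges : Finset (Sym2 V)

inductive Step (V : Type) where
  | vertex (v : V)
  | edge (e : Sym2 V)
deriving DecidableEq

variable {V : Type} [DecidableEq V] {m : ℕ}

def FGraph.sg (G : FGraph V) : SimpleGraph V :=
  SimpleGraph.fromEdgeSet (G.edges : Set (Sym2 V))

/-- `x` and `y` lie in the same connected component of `G`. -/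
def FGraph.ConnectedIn (G : FGraph V) (x y : V) : Prop :=
  x ∈ G.verts ∧ y ∈ G.verts ∧ G.sg.Reachable x y

/-- The number of connected components of `G`. -/
noncomputable def FGraph.numComponents (G : FGraph V) : ℕ :=
  Nat.card (Quot fun x y : {v // v ∈ G.verts} => G.sg.Adj x.1 y.1)

/-- First Betti number as an integer: `|E| + #components - |V|`. -/
noncomputable def FGraph.betti1 (G : FGraph V) : ℤ :=
  (G.edges.card : ℤ) + (G.numComponents : ℤ) - (G.verts.card : ℤ)

/-- The edge `e` lies on some cycle of `G`. -/
def FGraph.OnCycle (G : FGraph V) (e : Sym2 V) : Prop :=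
  ∃ (x : V) (c : G.sg.Walk x x), c.IsCycle ∧ e ∈ c.edges

def FGraph.addStep (G : FGraph V) : Step V → FGraph V
  | .vertex v => ⟨insert v G.verts, G.edges⟩
  | .edge e => ⟨G.verts, insert e G.edges⟩

def StepValid (G : FGraph V) : Step V → Prop
  | .vertex v => v ∉ G.verts
  | .edge e => e ∉ G.edges ∧ ¬ e.IsDiag ∧ ∀ v ∈ e, v ∈ G.verts

/-- A simplex-wise standard graph filtration of length `m`. -/
structure Filtration (V : Type) (m : ℕ) where
  steps : Fin m → Step V

namespace Filtration

def graphAt (F : Filtration V m) : ℕ → FGraph V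
  | 0 => ⟨∅, ∅⟩
  | i + 1 => if h : i < m then (F.graphAt i).addStep (F.steps ⟨i, h⟩) else F.graphAt i

def Valid (F : Filtration V m) : Prop :=
  ∀ i : Fin m, StepValid (F.graphAt (i : ℕ)) (F.steps i)

/-- The addition index of vertex `x`. -/
noncomputable def vidx (F : Filtration V m) (x : V) : ℕ :=
  sInf {n : ℕ | ∃ i : Fin m, (i : ℕ) = n ∧ F.steps i = Step.vertex x}

/-- The addition index of edge `e`. -/
noncomputable def eidx (F : Filtration V m) (e : Sym2 V) : ℕ :=
  sInf {n : ℕ | ∃ i : Fin m, (i : ℕ) = n ∧ F.steps i = Step.edge e}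

/-- Step `i` adds a negative edge: one merging two connected components. -/
def NegativeAt (F : Filtration V m) (i : Fin m) : Prop :=
  ∃ e, F.steps i = Step.edge e ∧
    (F.graphAt ((i : ℕ) + 1)).numComponents < (F.graphAt (i : ℕ)).numComponents

/-- Step `i` adds a positive edge: one not changing the number of components. -/
def PositiveAt (F : Filtration V m) (i : Fin m) : Prop :=
  ∃ e, F.steps i = Step.edge e ∧
    (F.graphAt ((i : ℕ) + 1)).numComponents = (F.graphAt (i : ℕ)).numComponents

/-- `x` is the oldest vertex of its connected component in `G_i`. -/
def OldestIn (F : Filtration V m) (i : ℕ) (x : V) : Prop :=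
  x ∈ (F.graphAt i).verts ∧
    ∀ y, (F.graphAt i).ConnectedIn x y → F.vidx x ≤ F.vidx y

/-- `x` is the vertex paired with the negative edge added at step `j`:
`x` is the younger of the two oldest vertices of the merged components. -/
def PairedAt (F : Filtration V m) (j : Fin m) (x : V) : Prop :=
  ∃ u v, F.steps j = Step.edge s(u, v) ∧
    ¬ (F.graphAt (j : ℕ)).ConnectedIn u v ∧
    (F.graphAt (j : ℕ)).ConnectedIn x u ∧ F.OldestIn (j : ℕ) x ∧
    ∃ y, (F.graphAt (j : ℕ)).ConnectedIn y v ∧ F.OldestIn (j : ℕ) y ∧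
      F.vidx y < F.vidx x

/-- `x` is unpaired at stage `i`: not paired with any negative edge added before `i`. -/
def UnpairedAt (F : Filtration V m) (i : ℕ) (x : V) : Prop :=
  ∀ j : Fin m, (j : ℕ) < i → ¬ F.PairedAt j x

/-- Step `i` contributes a node of the merge forest (a vertex leaf or a
negative edge internal node). -/
def IsNode (F : Filtration V m) (i : Fin m) : Prop :=
  (∃ v, F.steps i = Step.vertex v) ∨ F.NegativeAt i

/-- `x` is a representative vertex of the merge-forest node at level `i`. -/
def RepOf (F : Filtration V m) (i : Fin m) (x : V) : Prop :=
  F.steps i = Step.vertex x ∨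
    ∃ u v, F.steps i = Step.edge s(u, v) ∧
      ¬ (F.graphAt (i : ℕ)).ConnectedIn u v ∧ (x = u ∨ x = v)

/-- The merge-forest node at level `j` is a child of the (negative-edge)
node at level `i`: `j`'s component at time `i` is one of the two components
merged by the edge at step `i`, and no node of level strictly between `j`
and `i` lies in that component. -/
def MFChild (F : Filtration V m) (j i : Fin m) : Prop :=
  (j : ℕ) < (i : ℕ) ∧ F.IsNode j ∧
  ∃ u v, F.steps i = Step.edge s(u, v) ∧
    ¬ (F.graphAt (i : ℕ)).ConnectedIn u v ∧
    ∃ x, F.RepOf j x ∧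
      ((F.graphAt (i : ℕ)).ConnectedIn x u ∨ (F.graphAt (i : ℕ)).ConnectedIn x v) ∧
      ∀ j' : Fin m, (j : ℕ) < (j' : ℕ) → (j' : ℕ) < (i : ℕ) → F.IsNode j' →
        ∀ y, F.RepOf j' y → ¬ (F.graphAt (i : ℕ)).ConnectedIn x y

end Filtration
namespace Filtration

variable {V : Type} [DecidableEq V] {m : ℕ} (F : Filtration V m)

lemma graphAt_succ {i : ℕ} (h : i < m) :
    F.graphAt (i + 1) = (F.graphAt i).addStep (F.steps ⟨i, h⟩) := by
  simp [graphAt, h]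

lemma graphAt_succ_ge {i : ℕ} (h : ¬ i < m) : F.graphAt (i + 1) = F.graphAt i := by
  simp [graphAt, h]

lemma verts_subset_addStep (G : FGraph V) (s : Step V) : G.verts ⊆ (G.addStep s).verts := by
  cases s with
  | vertex v => exact Finset.subset_insert _ _
  | edge e => exact Finset.Subset.refl _

lemma edges_subset_addStep (G : FGraph V) (s : Step V) : G.edges ⊆ (G.addStep s).edges := by
  cases s with
  | vertex v => exact Finset.Subset.refl _
  | edge e => exact Finset.subset_insert _ _

lemma verts_mono {i k : ℕ} (h : i ≤ k) : (F.graphAt i).verts ⊆ (F.graphAt k).verts := by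
  induction k with
  | zero => simp_all
  | succ n ih =>
    rcases Nat.lt_or_ge i (n+1) with h' | h'
    · refine subset_trans (ih (Nat.lt_succ_iff.mp h')) ?_
      by_cases hn : n < m
      · rw [F.graphAt_succ hn]; exact verts_subset_addStep _ _
      · rw [F.graphAt_succ_ge hn]
    · have : i = n + 1 := le_antisymm h h'
      subst this; exact Finset.Subset.refl _

lemma edges_mono {i k : ℕ} (h : i ≤ k) : (F.graphAt i).edges ⊆ (F.graphAt k).edges := by
  induction k with
  | zero => simp_all
  | succ n ih =>
    rcases Nat.lt_or_ge i (n+1) with h' | h'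
    · refine subset_trans (ih (Nat.lt_succ_iff.mp h')) ?_
      by_cases hn : n < m
      · rw [F.graphAt_succ hn]; exact edges_subset_addStep _ _
      · rw [F.graphAt_succ_ge hn]
    · have : i = n + 1 := le_antisymm h h'
      subst this; exact Finset.Subset.refl _

lemma sg_mono {i k : ℕ} (h : i ≤ k) : (F.graphAt i).sg ≤ (F.graphAt k).sg := by
  apply SimpleGraph.fromEdgeSet_mono
  exact_mod_cast F.edges_mono h

lemma conn_mono {i k : ℕ} (h : i ≤ k) {x y : V}
    (hc : (F.graphAt i).ConnectedIn x y) : (F.graphAt k).ConnectedIn x y :=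
  ⟨F.verts_mono h hc.1, F.verts_mono h hc.2.1, hc.2.2.mono (F.sg_mono h)⟩

/-- endpoints of edges lie in verts -/
lemma edge_endpoints (hF : F.Valid) : ∀ i : ℕ, ∀ e ∈ (F.graphAt i).edges,
    ∀ v ∈ e, v ∈ (F.graphAt i).verts := by
  intro i
  induction i with
  | zero => simp [graphAt]
  | succ n ih =>
    by_cases hn : n < m
    · rw [F.graphAt_succ hn]
      have hv := hF ⟨n, hn⟩
      cases hst : F.steps ⟨n, hn⟩ with
      | vertex v =>
        intro e he w hw
        simp only [FGraph.addStep, hst] at he ⊢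
        exact Finset.mem_insert_of_mem (ih e he w hw)
      | edge e' =>
        intro e he w hw
        rw [hst] at hv
        simp only [FGraph.addStep, hst] at he ⊢
        rcases Finset.mem_insert.mp he with rfl | he
        · exact hv.2.2 w hw
        · exact ih e he w hw
    · rw [F.graphAt_succ_ge hn]; exact ih

lemma mem_verts_iff (i : ℕ) (x : V) :
    x ∈ (F.graphAt i).verts ↔ ∃ j : Fin m, (j : ℕ) < i ∧ F.steps j = Step.vertex x := by
  induction i with
  | zero => simp [graphAt]
  | succ n ih =>
    by_cases hn : n < m
    · rw [F.graphAt_succ hn]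
      cases hst : F.steps ⟨n, hn⟩ with
      | vertex v =>
        simp only [FGraph.addStep, Finset.mem_insert, ih]
        constructor
        · rintro (rfl | ⟨j, hj, hjs⟩)
          · exact ⟨⟨n, hn⟩, Nat.lt_succ_self n, hst⟩
          · exact ⟨j, Nat.lt_succ_of_lt hj, hjs⟩
        · rintro ⟨j, hj, hjs⟩
          rcases Nat.lt_succ_iff_lt_or_eq.mp hj with hj' | hj'
          · exact Or.inr ⟨j, hj', hjs⟩
          · left
            have : j = ⟨n, hn⟩ := Fin.ext hj'
            rw [this, hst] at hjs
            cases hjs; rfl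
      | edge e =>
        simp only [FGraph.addStep, ih]
        constructor
        · rintro ⟨j, hj, hjs⟩; exact ⟨j, Nat.lt_succ_of_lt hj, hjs⟩
        · rintro ⟨j, hj, hjs⟩
          rcases Nat.lt_succ_iff_lt_or_eq.mp hj with hj' | hj'
          · exact ⟨j, hj', hjs⟩
          · exfalso
            have : j = ⟨n, hn⟩ := Fin.ext hj'
            rw [this, hst] at hjs
            cases hjs
    · rw [F.graphAt_succ_ge hn, ih]
      constructor
      · rintro ⟨j, hj, hjs⟩; exact ⟨j, Nat.lt_succ_of_lt hj, hjs⟩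
      · rintro ⟨j, hj, hjs⟩
        exact ⟨j, lt_of_lt_of_le j.2 (le_of_not_gt hn), hjs⟩

end Filtration
section FGraphAux
set_option linter.unusedSectionVars false

variable {V : Type} [DecidableEq V]

lemma FGraph.conn_refl (G : FGraph V) {x : V} (hx : x ∈ G.verts) : G.ConnectedIn x x :=
  ⟨hx, hx, SimpleGraph.Reachable.refl x⟩

lemma FGraph.conn_symm (G : FGraph V) {x y : V} (h : G.ConnectedIn x y) : G.ConnectedIn y x :=
  ⟨h.2.1, h.1, h.2.2.symm⟩

lemma FGraph.conn_trans (G : FGraph V) {x y z : V} (h : G.ConnectedIn x y)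
    (h' : G.ConnectedIn y z) : G.ConnectedIn x z :=
  ⟨h.1, h'.2.1, h.2.2.trans h'.2.2⟩

lemma FGraph.adj_iff (G : FGraph V) {x y : V} :
    G.sg.Adj x y ↔ s(x, y) ∈ G.edges ∧ x ≠ y := by
  simp [FGraph.sg, SimpleGraph.fromEdgeSet_adj]

/-- The relation whose quotient counts components. -/
abbrev FGraph.crel (G : FGraph V) : {v // v ∈ G.verts} → {v // v ∈ G.verts} → Prop :=
  fun x y => G.sg.Adj x.1 y.1

lemma FGraph.numComponents_def (G : FGraph V) :
    G.numComponents = Nat.card (Quot G.crel) := rfl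

/-- An FGraph is closed if all edge endpoints are vertices. -/
def FGraph.Closed (G : FGraph V) : Prop := ∀ e ∈ G.edges, ∀ v ∈ e, v ∈ G.verts

lemma FGraph.quot_mk_eq_of_reachable (G : FGraph V) (hcl : G.Closed) {x y : V}
    (hx : x ∈ G.verts) (h : G.sg.Reachable x y) :
    ∃ hy : y ∈ G.verts, Quot.mk G.crel ⟨x, hx⟩ = Quot.mk G.crel ⟨y, hy⟩ := by
  rw [SimpleGraph.reachable_iff_reflTransGen] at h
  induction h with
  | refl => exact ⟨hx, rfl⟩
  | tail _ hadj ih =>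
    rename_i b c _
    obtain ⟨hb, hmk⟩ := ih
    have he : s(b, c) ∈ G.edges := (G.adj_iff.mp hadj).1
    have hc : c ∈ G.verts := hcl _ he c (Sym2.mem_mk_right b c)
    exact ⟨hc, hmk.trans (Quot.sound hadj)⟩

lemma FGraph.reachable_of_quot_mk_eq (G : FGraph V) {p q : {v // v ∈ G.verts}}
    (h : Quot.mk G.crel p = Quot.mk G.crel q) : G.sg.Reachable p.1 q.1 := by
  rw [Quot.eq] at h
  induction h with
  | rel _ _ hr => exact hr.reachable
  | refl => exact SimpleGraph.Reachable.refl _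
  | symm _ _ _ ih => exact ih.symm
  | trans _ _ _ _ _ ih1 ih2 => exact ih1.trans ih2

lemma FGraph.conn_iff_quot (G : FGraph V) (hcl : G.Closed) {x y : V} :
    G.ConnectedIn x y ↔
      ∃ (hx : x ∈ G.verts) (hy : y ∈ G.verts),
        Quot.mk G.crel ⟨x, hx⟩ = Quot.mk G.crel ⟨y, hy⟩ := by
  constructor
  · rintro ⟨hx, hy, hr⟩
    obtain ⟨hy', hmk⟩ := G.quot_mk_eq_of_reachable hcl hx hr
    exact ⟨hx, hy', hmk⟩
  · rintro ⟨hx, hy, hmk⟩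
    exact ⟨hx, hy, G.reachable_of_quot_mk_eq hmk⟩

/-- Key lemma: reachability after inserting an edge. -/
lemma FGraph.reach_addEdge (G : FGraph V) (a b : V) (hab : a ≠ b) {x y : V} :
    (G.addStep (.edge s(a, b))).sg.Reachable x y ↔
      G.sg.Reachable x y ∨ (G.sg.Reachable x a ∧ G.sg.Reachable b y) ∨
        (G.sg.Reachable x b ∧ G.sg.Reachable a y) := by
  have hle : G.sg ≤ (G.addStep (.edge s(a, b))).sg := by
    apply SimpleGraph.fromEdgeSet_mono
    intro e he
    simp only [FGraph.addStep, Finset.coe_insert, Set.mem_insert_iff] at *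
    exact Or.inr he
  have hadj : (G.addStep (.edge s(a, b))).sg.Adj a b := by
    rw [FGraph.adj_iff]
    exact ⟨Finset.mem_insert_self _ _, hab⟩
  constructor
  · intro h
    rw [SimpleGraph.reachable_iff_reflTransGen] at h
    induction h with
    | refl => exact Or.inl (SimpleGraph.Reachable.refl x)
    | tail _ hadj' ih =>
      rename_i p q _
      have : G.sg.Adj p q ∨ (p = a ∧ q = b) ∨ (p = b ∧ q = a) := by
        rw [FGraph.adj_iff] at hadj'
        obtain ⟨he, hne⟩ := hadj'
        simp only [FGraph.addStep, Finset.mem_insert] at he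
        rcases he with he | he
        · rw [Sym2.eq_iff] at he
          rcases he with ⟨rfl, rfl⟩ | ⟨rfl, rfl⟩
          · exact Or.inr (Or.inl ⟨rfl, rfl⟩)
          · exact Or.inr (Or.inr ⟨rfl, rfl⟩)
        · exact Or.inl ((G.adj_iff).mpr ⟨he, hne⟩)
      rcases this with hpq | ⟨hpa, hqb⟩ | ⟨hpb, hqa⟩
      · rcases ih with h1 | ⟨h1, h2⟩ | ⟨h1, h2⟩
        · exact Or.inl (h1.trans hpq.reachable)
        · exact Or.inr (Or.inl ⟨h1, h2.trans hpq.reachable⟩)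
        · exact Or.inr (Or.inr ⟨h1, h2.trans hpq.reachable⟩)
      · rw [hpa] at ih
        rw [hqb]
        rcases ih with h1 | ⟨h1, h2⟩ | ⟨h1, h2⟩
        · exact Or.inr (Or.inl ⟨h1, SimpleGraph.Reachable.refl b⟩)
        · exact Or.inr (Or.inl ⟨h1, SimpleGraph.Reachable.refl b⟩)
        · exact Or.inl h1
      · rw [hpb] at ih
        rw [hqa]
        rcases ih with h1 | ⟨h1, h2⟩ | ⟨h1, h2⟩
        · exact Or.inr (Or.inr ⟨h1, SimpleGraph.Reachable.refl a⟩)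
        · exact Or.inl h1
        · exact Or.inr (Or.inr ⟨h1, SimpleGraph.Reachable.refl a⟩)
  · intro h
    rcases h with h | ⟨h1, h2⟩ | ⟨h1, h2⟩
    · exact h.mono hle
    · exact ((h1.mono hle).trans hadj.reachable).trans (h2.mono hle)
    · exact ((h1.mono hle).trans hadj.symm.reachable).trans (h2.mono hle)

lemma FGraph.reach_addEdge_of_reach (G : FGraph V) (a b : V) (hab : a ≠ b)
    (hconn : G.sg.Reachable a b) {x y : V} :
    (G.addStep (.edge s(a, b))).sg.Reachable x y ↔ G.sg.Reachable x y := by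
  rw [G.reach_addEdge a b hab]
  constructor
  · rintro (h | ⟨h1, h2⟩ | ⟨h1, h2⟩)
    · exact h
    · exact (h1.trans hconn).trans h2
    · exact (h1.trans hconn.symm).trans h2
  · exact Or.inl

lemma FGraph.verts_addEdge (G : FGraph V) (e : Sym2 V) :
    (G.addStep (.edge e)).verts = G.verts := rfl

lemma FGraph.numComponents_addEdge_pos (G : FGraph V) (hcl : G.Closed) (a b : V)
    (hab : a ≠ b) (hconn : G.sg.Reachable a b) (ha : a ∈ G.verts) :
    (G.addStep (.edge s(a, b))).numComponents = G.numComponents := by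
  set G' := G.addStep (.edge s(a, b)) with hG'
  have hsub : {v // v ∈ G'.verts} = {v // v ∈ G.verts} := rfl
  rw [FGraph.numComponents_def, FGraph.numComponents_def]
  apply Nat.card_congr
  have h1 : ∀ p q : {v // v ∈ G.verts}, G'.crel p q → Quot.mk G.crel p = Quot.mk G.crel q := by
    intro p q hpq
    have : G.sg.Reachable p.1 q.1 := by
      rw [← G.reach_addEdge_of_reach a b hab hconn]
      exact hpq.reachable
    obtain ⟨hq, hmk⟩ := G.quot_mk_eq_of_reachable hcl p.2 this
    convert hmk using 2 <;> simp
  have h2 : ∀ p q : {v // v ∈ G.verts}, G.crel p q → Quot.mk G'.crel p = Quot.mk G'.crel q := by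
    intro p q hpq
    apply Quot.sound
    show G'.sg.Adj p.1 q.1
    exact (FGraph.adj_iff G').mpr
      ⟨Finset.mem_insert_of_mem ((FGraph.adj_iff G).mp hpq).1, ((FGraph.adj_iff G).mp hpq).2⟩
  exact {
    toFun := Quot.lift (Quot.mk G.crel) h1
    invFun := Quot.lift (Quot.mk G'.crel) h2
    left_inv := by rintro ⟨p⟩; rfl
    right_inv := by rintro ⟨p⟩; rfl }

lemma FGraph.numComponents_addEdge_neg (G : FGraph V) (hcl : G.Closed) (a b : V)
    (hab : a ≠ b) (ha : a ∈ G.verts) (hb : b ∈ G.verts)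
    (hconn : ¬ G.sg.Reachable a b) :
    (G.addStep (.edge s(a, b))).numComponents < G.numComponents := by
  set G' := G.addStep (.edge s(a, b)) with hG'
  rw [FGraph.numComponents_def, FGraph.numComponents_def]
  have h2 : ∀ p q : {v // v ∈ G.verts}, G.crel p q → Quot.mk G'.crel p = Quot.mk G'.crel q := by
    intro p q hpq
    apply Quot.sound
    show G'.sg.Adj p.1 q.1
    exact (FGraph.adj_iff G').mpr
      ⟨Finset.mem_insert_of_mem ((FGraph.adj_iff G).mp hpq).1, ((FGraph.adj_iff G).mp hpq).2⟩
  let f : Quot G.crel → Quot G'.crel := Quot.lift (Quot.mk G'.crel) h2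
  have hsurj : Function.Surjective f := by
    rintro ⟨p⟩; exact ⟨Quot.mk _ p, rfl⟩
  have hninj : ¬ Function.Injective f := by
    intro hinj
    have heq : f (Quot.mk _ ⟨a, ha⟩) = f (Quot.mk _ ⟨b, hb⟩) := by
      show Quot.mk G'.crel ⟨a, ha⟩ = Quot.mk G'.crel ⟨b, hb⟩
      apply Quot.sound
      show G'.sg.Adj a b
      exact (FGraph.adj_iff G').mpr ⟨Finset.mem_insert_self _ _, hab⟩
    have h4 : Quot.mk G.crel ⟨a, ha⟩ = Quot.mk G.crel ⟨b, hb⟩ := hinj heq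
    exact hconn (G.reachable_of_quot_mk_eq h4)
  have : Finite {v // v ∈ G.verts} := by infer_instance
  have hfin : Finite (Quot G.crel) := Finite.of_surjective (Quot.mk _) Quot.mk_surjective
  have hle : Nat.card (Quot G'.crel) ≤ Nat.card (Quot G.crel) :=
    Nat.card_le_card_of_surjective f hsurj
  rcases lt_or_eq_of_le hle with h | h
  · exact h
  · exfalso
    apply hninj
    exact ((Nat.bijective_iff_surjective_and_card f).mpr ⟨hsurj, h.symm⟩).injective

end FGraphAux
section FiltAux
set_option linter.unusedSectionVars false

lemma FGraph.conn_addEdge (G : FGraph V) (a b : V) (hab : a ≠ b) {x y : V} :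
    (G.addStep (.edge s(a, b))).ConnectedIn x y ↔
      x ∈ G.verts ∧ y ∈ G.verts ∧ (G.sg.Reachable x y ∨
        (G.sg.Reachable x a ∧ G.sg.Reachable b y) ∨
        (G.sg.Reachable x b ∧ G.sg.Reachable a y)) := by
  unfold FGraph.ConnectedIn
  rw [FGraph.verts_addEdge, G.reach_addEdge a b hab]

namespace Filtration

variable {m : ℕ} (F : Filtration V m)

lemma closed_graphAt (hF : F.Valid) (i : ℕ) : (F.graphAt i).Closed :=
  F.edge_endpoints hF i

lemma sg_addVertex (G : FGraph V) (v : V) : (G.addStep (.vertex v)).sg = G.sg := rfl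

lemma repOf_mem_verts (hF : F.Valid) {j : Fin m} {x : V} (h : F.RepOf j x) :
    x ∈ (F.graphAt ((j : ℕ) + 1)).verts := by
  rcases h with h | ⟨u, v, hst, _, hx⟩
  · exact (F.mem_verts_iff _ x).mpr ⟨j, Nat.lt_succ_self _, h⟩
  · have hv := hF j
    rw [hst] at hv
    apply F.verts_mono (Nat.le_succ _)
    apply hv.2.2 x
    rw [Sym2.mem_iff]
    exact hx

lemma repOf_mem_verts_of_lt (hF : F.Valid) {j : Fin m} {x : V} (h : F.RepOf j x)
    {i : ℕ} (hij : (j : ℕ) < i) : x ∈ (F.graphAt i).verts :=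
  F.verts_mono hij (F.repOf_mem_verts hF h)

lemma repOf_conn (hF : F.Valid) {j : Fin m} {x x' : V}
    (hx : F.RepOf j x) (hx' : F.RepOf j x') :
    (F.graphAt ((j : ℕ) + 1)).ConnectedIn x x' := by
  have hxm := F.repOf_mem_verts hF hx
  have hx'm := F.repOf_mem_verts hF hx'
  by_cases hxx : x = x'
  · subst hxx; exact (F.graphAt _).conn_refl hxm
  rcases hx with h | ⟨u, v, hst, _, hxe⟩
  · rcases hx' with h' | ⟨u', v', hst', _, _⟩
    · rw [h] at h'; cases h'; exact absurd rfl hxx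
    · rw [hst'] at h; cases h
  · rcases hx' with h' | ⟨u', v', hst', _, hx'e⟩
    · rw [hst] at h'; cases h'
    · -- both edge reps
      have he2 : s(u, v) = s(u', v') := Step.edge.inj (hst.symm.trans hst')
      have hxmem : x ∈ s(u, v) := Sym2.mem_iff.mpr hxe
      have hx'mem : x' ∈ s(u, v) := by rw [he2]; exact Sym2.mem_iff.mpr hx'e
      have heq : s(u, v) = s(x, x') :=
        Sym2.eq_of_ne_mem hxx hxmem hx'mem (Sym2.mem_mk_left x x') (Sym2.mem_mk_right x x')
      have hmem : s(x, x') ∈ (F.graphAt ((j : ℕ) + 1)).edges := by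
        rw [F.graphAt_succ j.2, hst]
        simp only [FGraph.addStep]
        rw [← heq]
        exact Finset.mem_insert_self _ _
      exact ⟨hxm, hx'm, ((FGraph.adj_iff _).mpr ⟨hmem, hxx⟩).reachable⟩

lemma not_adj_of_notMem (hF : F.Valid) {i : ℕ} {x : V}
    (hx : x ∉ (F.graphAt i).verts) (w : V) : ¬ (F.graphAt i).sg.Adj x w := by
  intro h
  rw [FGraph.adj_iff] at h
  exact hx (F.closed_graphAt hF i _ h.1 x (Sym2.mem_mk_left x w))

lemma eq_of_reach_of_notMem (hF : F.Valid) {i : ℕ} {x y : V}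
    (hx : x ∉ (F.graphAt i).verts) (h : (F.graphAt i).sg.Reachable x y) : x = y := by
  rw [SimpleGraph.reachable_iff_reflTransGen] at h
  rcases Relation.ReflTransGen.cases_head h with h | ⟨z, hz, _⟩
  · exact h
  · exact absurd hz (F.not_adj_of_notMem hF hx z)

lemma negativeAt_of_unconn (hF : F.Valid) {i : Fin m} {a b : V}
    (hst : F.steps i = .edge s(a, b))
    (h : ¬ (F.graphAt (i : ℕ)).ConnectedIn a b) : F.NegativeAt i := by
  have hv := hF i
  rw [hst] at hv
  obtain ⟨_, hdiag, hmem⟩ := hv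
  have hab : a ≠ b := fun hh => hdiag (Sym2.mk_isDiag_iff.mpr hh)
  have ha : a ∈ (F.graphAt (i : ℕ)).verts := hmem a (Sym2.mem_mk_left a b)
  have hb : b ∈ (F.graphAt (i : ℕ)).verts := hmem b (Sym2.mem_mk_right a b)
  have hr : ¬ (F.graphAt (i : ℕ)).sg.Reachable a b := fun hr => h ⟨ha, hb, hr⟩
  refine ⟨s(a, b), hst, ?_⟩
  rw [F.graphAt_succ i.2, hst]
  exact (F.graphAt (i : ℕ)).numComponents_addEdge_neg (F.closed_graphAt hF _) a b hab ha hb hr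

lemma numComp_succ_eq_of_conn (hF : F.Valid) {i : Fin m} {a b : V}
    (hst : F.steps i = .edge s(a, b))
    (h : (F.graphAt (i : ℕ)).ConnectedIn a b) :
    (F.graphAt ((i : ℕ) + 1)).numComponents = (F.graphAt (i : ℕ)).numComponents := by
  have hv := hF i
  rw [hst] at hv
  have hab : a ≠ b := fun hh => hv.2.1 (Sym2.mk_isDiag_iff.mpr hh)
  rw [F.graphAt_succ i.2, hst]
  exact (F.graphAt (i : ℕ)).numComponents_addEdge_pos (F.closed_graphAt hF _) a b hab h.2.2 h.1

lemma not_isNode_of_conn (hF : F.Valid) {i : Fin m} {a b : V}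
    (hst : F.steps i = .edge s(a, b))
    (h : (F.graphAt (i : ℕ)).ConnectedIn a b) : ¬ F.IsNode i := by
  rintro (⟨v, hv⟩ | ⟨e, he, hlt⟩)
  · rw [hst] at hv; cases hv
  · rw [F.numComp_succ_eq_of_conn hF hst h] at hlt
    exact lt_irrefl _ hlt

end Filtration

end FiltAux
namespace Filtration

section Main
set_option linter.unusedSectionVars false
set_option maxHeartbeats 1000000

variable {V : Type} [DecidableEq V] {m : ℕ} (F : Filtration V m)

/-- `j` is a root of the merge forest restricted to levels `< i`. -/
def IsRoot (F : Filtration V m) (i : ℕ) (j : Fin m) : Prop :=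
  (j : ℕ) < i ∧ F.IsNode j ∧ ∀ i' : Fin m, (i' : ℕ) < i → ¬ F.MFChild j i'

theorem main_induction (hF : F.Valid) (i : ℕ) (hi : i ≤ m) :
    (∀ j : Fin m, F.IsRoot i j → ∀ x, F.RepOf j x →
      ∀ j'' : Fin m, (j : ℕ) < (j'' : ℕ) → (j'' : ℕ) < i → F.IsNode j'' →
        ∀ y, F.RepOf j'' y → ¬ (F.graphAt i).ConnectedIn x y) ∧
    (∀ x ∈ (F.graphAt i).verts, ∃ j : Fin m, F.IsRoot i j ∧
      ∃ y, F.RepOf j y ∧ (F.graphAt i).ConnectedIn x y) := by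
  induction i with
  | zero =>
    constructor
    · intro j hj
      exact absurd hj.1 (Nat.not_lt_zero _)
    · intro x hx
      simp [graphAt] at hx
  | succ n ih =>
    have hn : n < m := hi
    obtain ⟨IH5, IH4⟩ := ih (le_of_lt hn)
    have hG1 : F.graphAt (n + 1) = (F.graphAt n).addStep (F.steps ⟨n, hn⟩) :=
      F.graphAt_succ hn
    have hrootdown : ∀ j : Fin m, (j : ℕ) < n → F.IsRoot (n + 1) j → F.IsRoot n j := by
      rintro j hjn ⟨_, hnode, hch⟩
      exact ⟨hjn, hnode, fun i' hi' => hch i' (Nat.lt_succ_of_lt hi')⟩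
    have hfin : ∀ j : Fin m, (j : ℕ) < n + 1 → (j : ℕ) < n ∨ j = ⟨n, hn⟩ := by
      intro j hj
      rcases Nat.lt_succ_iff_lt_or_eq.mp hj with h | h
      · exact Or.inl h
      · exact Or.inr (Fin.ext h)
    cases hst : F.steps ⟨n, hn⟩ with
    | vertex v =>
      have hv : v ∉ (F.graphAt n).verts := by
        have := hF ⟨n, hn⟩; rw [hst] at this; exact this
      have hverts : (F.graphAt (n + 1)).verts = insert v (F.graphAt n).verts := by
        rw [hG1, hst]; rfl
      have hsg : (F.graphAt (n + 1)).sg = (F.graphAt n).sg := by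
        rw [hG1, hst]; rfl
      have hnode_n : F.IsNode ⟨n, hn⟩ := Or.inl ⟨v, hst⟩
      have hrep_n : ∀ y, F.RepOf ⟨n, hn⟩ y → y = v := by
        rintro y (h | ⟨u, w, h, _⟩)
        · rw [hst] at h; cases h; rfl
        · rw [hst] at h; cases h
      have hnochild : ∀ j : Fin m, ¬ F.MFChild j ⟨n, hn⟩ := by
        rintro j ⟨_, _, u, w, h, _⟩
        rw [hst] at h; cases h
      have hroot_up : ∀ j : Fin m, F.IsRoot n j → F.IsRoot (n + 1) j := by
        rintro j ⟨h1, h2, h3⟩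
        refine ⟨Nat.lt_succ_of_lt h1, h2, fun i' hi' => ?_⟩
        rcases hfin i' hi' with h | h
        · exact h3 i' h
        · rw [h]; exact hnochild j
      have hroot_new : F.IsRoot (n + 1) ⟨n, hn⟩ := by
        refine ⟨Nat.lt_succ_self n, hnode_n, fun i' hi' hc => ?_⟩
        have := hc.1
        simp only at this
        omega
      constructor
      · intro j hroot x hx j'' h1 h2 hnode'' y hy hconn
        rcases hfin j hroot.1 with hjn | rfl
        · have hroot_n := hrootdown j hjn hroot
          have hxm : x ∈ (F.graphAt n).verts := F.repOf_mem_verts_of_lt hF hx hjn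
          rcases hfin j'' h2 with hj''n | rfl
          · have hym : y ∈ (F.graphAt n).verts := F.repOf_mem_verts_of_lt hF hy hj''n
            have hr : (F.graphAt n).sg.Reachable x y := by
              have := hconn.2.2; rwa [hsg] at this
            exact IH5 j hroot_n x hx j'' h1 hj''n hnode'' y hy ⟨hxm, hym, hr⟩
          · have hyv : y = v := hrep_n y hy
            subst hyv
            have hr : (F.graphAt n).sg.Reachable x y := by
              have := hconn.2.2; rwa [hsg] at this
            have := F.eq_of_reach_of_notMem hF hv hr.symm
            rw [← this] at hxm
            exact hv hxm
        · simp only at h1 h2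
          omega
      · intro x hx
        rw [hverts, Finset.mem_insert] at hx
        rcases hx with rfl | hx
        · refine ⟨⟨n, hn⟩, hroot_new, x, Or.inl hst, ?_⟩
          have hm : x ∈ (F.graphAt (n + 1)).verts := by
            rw [hverts]; exact Finset.mem_insert_self _ _
          exact (F.graphAt (n + 1)).conn_refl hm
        · obtain ⟨j, hroot, y, hrep, hconn⟩ := IH4 x hx
          exact ⟨j, hroot_up j hroot, y, hrep, F.conn_mono (Nat.le_succ n) hconn⟩
    | edge e =>
      induction e using Sym2.ind with
      | _ a b =>
      have hv := hF ⟨n, hn⟩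
      rw [hst] at hv
      obtain ⟨hnotmem, hdiag, hepts⟩ := hv
      have hab : a ≠ b := fun hh => hdiag (Sym2.mk_isDiag_iff.mpr hh)
      have ha : a ∈ (F.graphAt n).verts := hepts a (Sym2.mem_mk_left a b)
      have hb : b ∈ (F.graphAt n).verts := hepts b (Sym2.mem_mk_right a b)
      have hG1' : F.graphAt (n + 1) = (F.graphAt n).addStep (.edge s(a, b)) := by
        rw [hG1, hst]
      have hverts : (F.graphAt (n + 1)).verts = (F.graphAt n).verts := by
        rw [hG1']; rfl
      by_cases hpos : (F.graphAt n).ConnectedIn a b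
      · -- positive edge
        have hreq : ∀ x y : V, (F.graphAt (n + 1)).sg.Reachable x y ↔
            (F.graphAt n).sg.Reachable x y := by
          intro x y
          rw [hG1']
          exact (F.graphAt n).reach_addEdge_of_reach a b hab hpos.2.2
        have hconn_eq : ∀ x y : V, (F.graphAt (n + 1)).ConnectedIn x y ↔
            (F.graphAt n).ConnectedIn x y := by
          intro x y
          unfold FGraph.ConnectedIn
          rw [hverts, hreq]
        have hnotnode : ¬ F.IsNode ⟨n, hn⟩ := F.not_isNode_of_conn hF hst hpos
        have hnochild : ∀ j : Fin m, ¬ F.MFChild j ⟨n, hn⟩ := by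
          rintro j ⟨_, _, u, w, h, hne, _⟩
          have he2 : s(u, w) = s(a, b) := Step.edge.inj (h.symm.trans hst)
          rcases Sym2.eq_iff.mp he2 with ⟨rfl, rfl⟩ | ⟨rfl, rfl⟩
          · exact hne hpos
          · exact hne (FGraph.conn_symm _ hpos)
        have hroot_up : ∀ j : Fin m, F.IsRoot n j → F.IsRoot (n + 1) j := by
          rintro j ⟨h1, h2, h3⟩
          refine ⟨Nat.lt_succ_of_lt h1, h2, fun i' hi' => ?_⟩
          rcases hfin i' hi' with h | h
          · exact h3 i' h
          · rw [h]; exact hnochild j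
        constructor
        · intro j hroot x hx j'' h1 h2 hnode'' y hy hconn
          rcases hfin j hroot.1 with hjn | rfl
          · have hroot_n := hrootdown j hjn hroot
            rcases hfin j'' h2 with hj''n | rfl
            · exact IH5 j hroot_n x hx j'' h1 hj''n hnode'' y hy
                ((hconn_eq x y).mp hconn)
            · exact hnotnode hnode''
          · simp only at h1 h2
            omega
        · intro x hx
          rw [hverts] at hx
          obtain ⟨j, hroot, y, hrep, hconn⟩ := IH4 x hx
          exact ⟨j, hroot_up j hroot, y, hrep, F.conn_mono (Nat.le_succ n) hconn⟩
      · -- negative edge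
        have hnR : ¬ (F.graphAt n).sg.Reachable a b := fun h => hpos ⟨ha, hb, h⟩
        have hnode_n : F.IsNode ⟨n, hn⟩ := Or.inr (F.negativeAt_of_unconn hF hst hpos)
        have hrepa : F.RepOf ⟨n, hn⟩ a := Or.inr ⟨a, b, hst, hpos, Or.inl rfl⟩
        have hrepb : F.RepOf ⟨n, hn⟩ b := Or.inr ⟨a, b, hst, hpos, Or.inr rfl⟩
        have hrep_n : ∀ y, F.RepOf ⟨n, hn⟩ y → y = a ∨ y = b := by
          rintro y (h | ⟨u, w, h, _, hy⟩)
          · rw [hst] at h; cases h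
          · have he2 : s(u, w) = s(a, b) := Step.edge.inj (h.symm.trans hst)
            have : y ∈ s(a, b) := by
              rw [← he2, Sym2.mem_iff]; exact hy
            rwa [Sym2.mem_iff] at this
        have hroot_new : F.IsRoot (n + 1) ⟨n, hn⟩ := by
          refine ⟨Nat.lt_succ_self n, hnode_n, fun i' hi' hc => ?_⟩
          have := hc.1
          simp only at this
          omega
        have hconn_iff : ∀ x y : V, (F.graphAt (n + 1)).ConnectedIn x y ↔
            x ∈ (F.graphAt n).verts ∧ y ∈ (F.graphAt n).verts ∧
              ((F.graphAt n).sg.Reachable x y ∨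
                ((F.graphAt n).sg.Reachable x a ∧ (F.graphAt n).sg.Reachable b y) ∨
                ((F.graphAt n).sg.Reachable x b ∧ (F.graphAt n).sg.Reachable a y)) := by
          intro x y
          rw [hG1']
          exact (F.graphAt n).conn_addEdge a b hab
        constructor
        · intro j hroot x hx j'' h1 h2 hnode'' y hy hconn
          rcases hfin j hroot.1 with hjn | rfl
          · have hroot_n := hrootdown j hjn hroot
            have hxm : x ∈ (F.graphAt n).verts := F.repOf_mem_verts_of_lt hF hx hjn
            have hnm : ¬ F.MFChild j ⟨n, hn⟩ := hroot.2.2 ⟨n, hn⟩ (Nat.lt_succ_self n)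
            have hxab : ¬ (F.graphAt n).ConnectedIn x a ∧
                ¬ (F.graphAt n).ConnectedIn x b := by
              constructor <;> intro hca <;> apply hnm <;>
                exact ⟨hjn, hroot_n.2.1, a, b, hst, hpos, x, hx,
                  (by first | exact Or.inl hca | exact Or.inr hca),
                  fun j' hjj' hj'n hnode' y' hy' =>
                    IH5 j hroot_n x hx j' hjj' hj'n hnode' y' hy'⟩
            obtain ⟨hxm', hym', hr⟩ := (hconn_iff x y).mp hconn
            have hrxy : (F.graphAt n).sg.Reachable x y := by
              rcases hr with h | ⟨h1', _⟩ | ⟨h1', _⟩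
              · exact h
              · exact absurd ⟨hxm, ha, h1'⟩ hxab.1
              · exact absurd ⟨hxm, hb, h1'⟩ hxab.2
            rcases hfin j'' h2 with hj''n | rfl
            · exact IH5 j hroot_n x hx j'' h1 hj''n hnode'' y hy ⟨hxm', hym', hrxy⟩
            · rcases hrep_n y hy with rfl | rfl
              · exact hxab.1 ⟨hxm, ha, hrxy⟩
              · exact hxab.2 ⟨hxm, hb, hrxy⟩
          · simp only at h1 h2
            omega
        · intro x hx
          rw [hverts] at hx
          by_cases hca : (F.graphAt n).ConnectedIn x a
          · exact ⟨⟨n, hn⟩, hroot_new, a, hrepa, F.conn_mono (Nat.le_succ n) hca⟩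
          by_cases hcb : (F.graphAt n).ConnectedIn x b
          · exact ⟨⟨n, hn⟩, hroot_new, b, hrepb, F.conn_mono (Nat.le_succ n) hcb⟩
          obtain ⟨j, hroot, y, hrep, hconn⟩ := IH4 x hx
          have hnm : ¬ F.MFChild j ⟨n, hn⟩ := by
            rintro ⟨hlt, hnodej, u, w, hst', hne', x', hx', hdisj, _⟩
            simp only at hlt
            have he2 : s(u, w) = s(a, b) := Step.edge.inj (hst'.symm.trans hst)
            have hyx' : (F.graphAt n).ConnectedIn y x' :=
              F.conn_mono hlt (F.repOf_conn hF hrep hx')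
            have hxx' : (F.graphAt n).ConnectedIn x x' :=
              (F.graphAt n).conn_trans hconn hyx'
            rcases Sym2.eq_iff.mp he2 with ⟨rfl, rfl⟩ | ⟨rfl, rfl⟩
            · rcases hdisj with h | h
              · exact hca ((F.graphAt n).conn_trans hxx' h)
              · exact hcb ((F.graphAt n).conn_trans hxx' h)
            · rcases hdisj with h | h
              · exact hcb ((F.graphAt n).conn_trans hxx' h)
              · exact hca ((F.graphAt n).conn_trans hxx' h)
          have hroot' : F.IsRoot (n + 1) j := by
            refine ⟨Nat.lt_succ_of_lt hroot.1, hroot.2.1, fun i' hi' => ?_⟩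
            rcases hfin i' hi' with h | h
            · exact hroot.2.2 i' h
            · rw [h]; exact hnm
          exact ⟨j, hroot', y, hrep, F.conn_mono (Nat.le_succ n) hconn⟩

end Main

end Filtration
section Assemble
set_option linter.unusedSectionVars false
set_option maxHeartbeats 1000000

namespace Filtration

variable {V : Type} [DecidableEq V] {m : ℕ} (F : Filtration V m)

lemma exists_rep_of_isNode (hF : F.Valid) {j : Fin m} (h : F.IsNode j) :
    ∃ x, F.RepOf j x := by
  rcases h with ⟨v, hv⟩ | ⟨e, he, hlt⟩
  · exact ⟨v, Or.inl hv⟩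
  · induction e using Sym2.ind with
    | _ a b =>
      have hnc : ¬ (F.graphAt (j : ℕ)).ConnectedIn a b := by
        intro hc
        rw [F.numComp_succ_eq_of_conn hF he hc] at hlt
        exact lt_irrefl _ hlt
      exact ⟨a, Or.inr ⟨a, b, he, hnc, Or.inl rfl⟩⟩

end Filtration

end Assemble

/-- the trees of the merge forest restricted to nodes of level
`< i` (i.e. the nodes of level `< i` having no parent of level `< i`) are in
bijection with the connected components of `G_i`: their number equals the
number of components, each root's representative vertex lies in `G_i`,
distinct roots have representatives in distinct components, and every vertex
of `G_i` lies in the component of some root's representative. -/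
theorem stmt_17 {V : Type} [DecidableEq V] {m : ℕ} (F : Filtration V m)
    (hF : F.Valid) (i : ℕ) (hi : i ≤ m) :
    Nat.card {j : Fin m // (j : ℕ) < i ∧ F.IsNode j ∧
        ∀ i' : Fin m, (i' : ℕ) < i → ¬ F.MFChild j i'} =
      (F.graphAt i).numComponents ∧
    (∀ j : Fin m, (j : ℕ) < i → F.IsNode j →
      (∀ i' : Fin m, (i' : ℕ) < i → ¬ F.MFChild j i') →
      ∃ x, F.RepOf j x ∧ x ∈ (F.graphAt i).verts) ∧
    (∀ j j' : Fin m, (j : ℕ) < i → (j' : ℕ) < i → F.IsNode j → F.IsNode j' →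
      (∀ i' : Fin m, (i' : ℕ) < i → ¬ F.MFChild j i') →
      (∀ i' : Fin m, (i' : ℕ) < i → ¬ F.MFChild j' i') → j ≠ j' →
      ∀ x y : V, F.RepOf j x → F.RepOf j' y →
        ¬ (F.graphAt i).ConnectedIn x y) ∧
    (∀ x ∈ (F.graphAt i).verts, ∃ j : Fin m, (j : ℕ) < i ∧ F.IsNode j ∧
      (∀ i' : Fin m, (i' : ℕ) < i → ¬ F.MFChild j i') ∧
      ∃ y, F.RepOf j y ∧ (F.graphAt i).ConnectedIn x y) := by
  obtain ⟨P5, P4⟩ := F.main_induction hF i hi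
  have hclosed := F.closed_graphAt hF i
  have c2 : ∀ j : Fin m, (j : ℕ) < i → F.IsNode j →
      (∀ i' : Fin m, (i' : ℕ) < i → ¬ F.MFChild j i') →
      ∃ x, F.RepOf j x ∧ x ∈ (F.graphAt i).verts := by
    intro j hj hnode _
    obtain ⟨x, hx⟩ := F.exists_rep_of_isNode hF hnode
    exact ⟨x, hx, F.repOf_mem_verts_of_lt hF hx hj⟩
  have c3 : ∀ j j' : Fin m, (j : ℕ) < i → (j' : ℕ) < i → F.IsNode j → F.IsNode j' →
      (∀ i' : Fin m, (i' : ℕ) < i → ¬ F.MFChild j i') →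
      (∀ i' : Fin m, (i' : ℕ) < i → ¬ F.MFChild j' i') → j ≠ j' →
      ∀ x y : V, F.RepOf j x → F.RepOf j' y →
        ¬ (F.graphAt i).ConnectedIn x y := by
    intro j j' hj hj' hnode hnode' hr hr' hne x y hx hy hconn
    rcases lt_trichotomy (j : ℕ) (j' : ℕ) with h | h | h
    · exact P5 j ⟨hj, hnode, hr⟩ x hx j' h hj' hnode' y hy hconn
    · exact hne (Fin.ext h)
    · exact P5 j' ⟨hj', hnode', hr'⟩ y hy j h hj hnode x hx
        ((F.graphAt i).conn_symm hconn)
  have c4 : ∀ x ∈ (F.graphAt i).verts, ∃ j : Fin m, (j : ℕ) < i ∧ F.IsNode j ∧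
      (∀ i' : Fin m, (i' : ℕ) < i → ¬ F.MFChild j i') ∧
      ∃ y, F.RepOf j y ∧ (F.graphAt i).ConnectedIn x y := by
    intro x hx
    obtain ⟨j, ⟨h1, h2, h3⟩, y, hy, hc⟩ := P4 x hx
    exact ⟨j, h1, h2, h3, y, hy, hc⟩
  refine ⟨?_, c2, c3, c4⟩
  rw [FGraph.numComponents_def]
  have key : ∀ j : {j : Fin m // (j : ℕ) < i ∧ F.IsNode j ∧
      ∀ i' : Fin m, (i' : ℕ) < i → ¬ F.MFChild j i'},
      ∃ x : {v // v ∈ (F.graphAt i).verts}, F.RepOf j.1 x.1 := by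
    intro j
    obtain ⟨x, hx, hm⟩ := c2 j.1 j.2.1 j.2.2.1 j.2.2.2
    exact ⟨⟨x, hm⟩, hx⟩
  choose rep hrep using key
  apply Nat.card_eq_of_bijective (fun j => Quot.mk _ (rep j))
  constructor
  · intro j j' heq
    have hreach := (F.graphAt i).reachable_of_quot_mk_eq heq
    by_contra hne
    exact c3 j.1 j'.1 j.2.1 j'.2.1 j.2.2.1 j'.2.2.1 j.2.2.2 j'.2.2.2
      (fun h => hne (Subtype.ext h)) _ _ (hrep j) (hrep j')
      ⟨(rep j).2, (rep j').2, hreach⟩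
  · intro q
    induction q using Quot.ind with
    | _ p =>
      obtain ⟨x, hx⟩ := p
      obtain ⟨j, ⟨h1, h2, h3⟩, y, hy, hc⟩ := P4 x hx
      refine ⟨⟨j, h1, h2, h3⟩, ?_⟩
      have h4 : (F.graphAt i).ConnectedIn y (rep ⟨j, h1, h2, h3⟩).1 :=
        F.conn_mono h1 (F.repOf_conn hF hy (hrep ⟨j, h1, h2, h3⟩))
      have hconn : (F.graphAt i).ConnectedIn (rep ⟨j, h1, h2, h3⟩).1 x :=
        (F.graphAt i).conn_symm ((F.graphAt i).conn_trans hc h4)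
      obtain ⟨hx1, hx2, hmk⟩ := ((F.graphAt i).conn_iff_quot hclosed).mp hconn
      exact hmk
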